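/- arXiv:1301.2116 — 2 statements merged into one kernel-verified Lean document; each statement's English description precedes it below -/
import Mathlib

section
/- Let B = A(I + A)^{−1} where A is the N×N nilpotent matrix with superdiagonal entries ν_i. Then for every real x, e^{−Bx²} J e^{Bx²} = J + x²(B − B²), where J is the diagonal matrix with entries N−i. -/
open Matrix

/-!
Because `J` weights the entry `(i, j)` by `j - i`, the commutator `[J, A]` equals `A`. The matrix
`1 + A` is unipotent, so `C = (1 + A)⁻¹` exists, `B = 1 - C`, and
`[J, B] = C [J, A] C = C A C = B - B²`, which commutes with `B`. Therefore the derivative of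
`t ↦ e^{-tB} J e^{tB} - t (B - B²)` is `e^{-tB} ([J, B] - (B - B²)) e^{tB} = 0`, and comparing
`t = 0` with `t = 1` (for `x² B` in place of `B`) gives the identity.
-/

theorem exp_neg_mul_mul_exp_of_commutator {𝔸 : Type*} [NormedRing 𝔸] [NormedAlgebra ℝ 𝔸]
    [CompleteSpace 𝔸] {B J D : 𝔸} (hJB : J * B - B * J = D) (hBD : Commute B D) :
    NormedSpace.exp (-B) * J * NormedSpace.exp B = J + D := by
  let f : ℝ → 𝔸 := fun t ↦
    NormedSpace.exp (t • -B) * J * NormedSpace.exp (t • B) - t • D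
  have hf : ∀ t, HasDerivAt f 0 t := by
    intro t
    set E' := NormedSpace.exp (t • -B)
    set E := NormedSpace.exp (t • B)
    have hinv : E' * E = 1 := by
      let : NormedAlgebra ℚ 𝔸 := NormedAlgebra.restrictScalars ℚ ℝ 𝔸
      rw [← NormedSpace.exp_add_of_commute (((Commute.refl B).neg_left.smul_left t).smul_right t),
        ← smul_add, neg_add_cancel, smul_zero, NormedSpace.exp_zero]
    have hE' : Commute (-B) E' := ((Commute.refl (-B)).smul_right t).exp_right
    have hE : Commute B E := ((Commute.refl B).smul_right t).exp_right
    have hD : Commute D E := (hBD.symm.smul_right t).exp_right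
    refine ((((hasDerivAt_exp_smul_const' (-B) t).mul_const J).mul
      (hasDerivAt_exp_smul_const B t)).sub ((hasDerivAt_id t).smul_const D)).congr_deriv ?_
    calc -B * E' * J * E + E' * J * (E * B) - (1 : ℝ) • D
        = E' * (J * B - B * J) * E - D := by
          rw [hE'.eq, ← hE.eq, one_smul]; noncomm_ring
      _ = 0 := by rw [hJB, mul_assoc, hD.eq, ← mul_assoc, hinv, one_mul, sub_self]
  have h := is_const_of_deriv_eq_zero (fun t ↦ (hf t).differentiableAt) (fun t ↦ (hf t).deriv) 1 0
  simp only [f, one_smul, zero_smul, NormedSpace.exp_zero, one_mul, mul_one, sub_zero] at h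
  exact eq_add_of_sub_eq h

theorem commutator_mul_inv_one_add {R : Type*} [Ring R] {J A C : R} (h₁ : (1 + A) * C = 1)
    (h₂ : C * (1 + A) = 1) (hJA : J * A - A * J = A) :
    J * (A * C) - A * C * J = A * C - (A * C) ^ 2 := by
  have hAC : A * C = 1 - C := by rw [← h₁]; noncomm_ring
  have hCA : C * A = 1 - C := by rw [← h₂]; noncomm_ring
  calc J * (A * C) - A * C * J = C * J * ((1 + A) * C) - C * (1 + A) * J * C := by
        rw [h₁, h₂, hAC]; noncomm_ring
    _ = C * (J * A - A * J) * C := by noncomm_ring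
    _ = A * C - (A * C) ^ 2 := by rw [hJA, hCA, hAC]; noncomm_ring

def superdiag {R : Type*} [Zero R] {N : ℕ} (ν : Fin N → R) : Matrix (Fin N) (Fin N) R :=
  of fun i j ↦ if (j : ℕ) = i + 1 then ν i else 0

section Superdiag

variable {R : Type*} [CommRing R] {N : ℕ}

theorem diagonal_mul_superdiag_sub (c : R) (ν : Fin N → R) :
    diagonal (fun i : Fin N ↦ c - (i : ℕ)) * superdiag ν
      - superdiag ν * diagonal (fun i : Fin N ↦ c - (i : ℕ)) = superdiag ν := by
  ext i j
  simp only [superdiag, Matrix.sub_apply, diagonal_mul, mul_diagonal, of_apply]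
  split_ifs with h
  · rw [h, Nat.cast_succ]; ring
  · simp

theorem det_one_add_superdiag (ν : Fin N → R) : (1 + superdiag ν).det = 1 := by
  rw [det_of_isUpperTriangular]
  · simp [superdiag]
  · intro i j (hji : j < i)
    have : (j : ℕ) ≠ i + 1 := by omega
    simp [superdiag, this, one_apply_ne hji.ne']

end Superdiag

theorem conjugation_exp_B (N : ℕ) (ν : Fin N → ℝ)
    (A : Matrix (Fin N) (Fin N) ℝ)
    (hA : A = Matrix.of fun (i j : Fin N) => if (j : ℕ) = (i : ℕ) + 1 then ν i else 0)
    (J : Matrix (Fin N) (Fin N) ℝ)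
    (hJ : J = Matrix.diagonal fun (i : Fin N) => (N : ℝ) - 1 - (i : ℕ))
    (B : Matrix (Fin N) (Fin N) ℝ)
    (hB : B = A * (1 + A)⁻¹)
    (x : ℝ) :
    NormedSpace.exp (-(x ^ 2 • B)) * J * NormedSpace.exp (x ^ 2 • B)
      = J + x ^ 2 • (B - B ^ 2) := by
  replace hA : A = superdiag ν := hA
  have hdet : IsUnit (1 + A).det := by rw [hA, det_one_add_superdiag]; exact isUnit_one
  have hJB : J * B - B * J = B - B ^ 2 := hB ▸
    commutator_mul_inv_one_add (mul_nonsing_inv _ hdet) (nonsing_inv_mul _ hdet)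
      (hJ ▸ hA ▸ diagonal_mul_superdiag_sub _ ν)
  open scoped Norms.Operator in
  exact exp_neg_mul_mul_exp_of_commutator
    (by rw [mul_smul_comm, smul_mul_assoc, ← smul_sub, hJB])
    ((((Commute.refl B).sub_right ((Commute.refl B).pow_right 2)).smul_left _).smul_right _)
end

section
/- With γ_n² = 1 + nν²/2 and J_2 = diag(1,0), the 2×2 matrix M̃_n(z,w) with entries M̃_{11} = (z(γ_n²−1)+w)/(wγ_n²), M̃_{12} = ν(w−z)/γ_n², M̃_{21} = (nν/(2γ_n²))(z^{−1}−w^{−1}), M̃_{22} = (w(γ_n²−1)+z)/(zγ_n²) factorizes as M̃_n(z,w) = z^{J_2} B_n z^{−J_2} w^{J_2} B_n^{−1} w^{−J_2}, where B_n = [[1,−ν],[nν/2,1]]. -/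
open Matrix

theorem Mtilde_factorization (n : ℕ) (ν : ℝ) (z w : ℝ) (hz : z ≠ 0) (hw : w ≠ 0)
    (γ : ℝ) (hγ : γ = 1 + n * ν ^ 2 / 2)
    (B : Matrix (Fin 2) (Fin 2) ℝ) (hB : B = !![1, -ν; n * ν / 2, 1])
    (M : Matrix (Fin 2) (Fin 2) ℝ)
    (hM : M = !![(z * (γ - 1) + w) / (w * γ), ν * (w - z) / γ;
                 (n * ν / (2 * γ)) * (z⁻¹ - w⁻¹), (w * (γ - 1) + z) / (z * γ)]) :
    M = !![z, 0; 0, 1] * B * !![z, 0; 0, 1]⁻¹ * !![w, 0; 0, 1] * B⁻¹ * !![w, 0; 0, 1]⁻¹ := by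
  subst hγ
  have hγpos : 1 + (n:ℝ) * ν ^ 2 / 2 > 0 := by positivity
  set γ : ℝ := 1 + (n:ℝ) * ν ^ 2 / 2 with hγ
  have hγ0 : γ ≠ 0 := ne_of_gt hγpos
  subst hB hM
  have hdB : (!![1, -ν; (n : ℝ) * ν / 2, 1]).det = γ := by
    simp [Matrix.det_fin_two_of, hγ]; ring
  have hdz : (!![z, 0; 0, (1:ℝ)]).det = z := by simp [Matrix.det_fin_two_of]
  have hdw : (!![w, 0; 0, (1:ℝ)]).det = w := by simp [Matrix.det_fin_two_of]
  rw [Matrix.inv_def, Matrix.inv_def, Matrix.inv_def, hdB, hdz, hdw,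
    Ring.inverse_eq_inv, Ring.inverse_eq_inv, Ring.inverse_eq_inv]
  ext i j
  fin_cases i <;> fin_cases j <;>
    simp [Matrix.adjugate_fin_two, Matrix.mul_apply, Fin.sum_univ_succ, hγ] <;>
    field_simp <;> ring
end
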